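/- arXiv:2004.08924 — 2 statements merged into one kernel-verified Lean document; each statement's English description precedes it below -/
import Mathlib

section
/- Suppose nonnegative integers T, K, q with T > 2K, K ≥ 1, q ≥ 2 satisfy T_{q-1} + K < T ≤ T_q, where T_m = K·m + ∑_{t=1}^m ⌊(5/6)·K·t^{1/2}⌋. Then (1/2)·K^{-2/3}·T^{2/3} ≤ q ≤ 3·K^{-2/3}·T^{2/3}. -/
/-- Number of rounds completed after `m` brackets: each bracket has `K` exploration
rounds followed by `⌊(5/6)·K·t^{1/2}⌋` exploitation rounds in bracket `t`. -/
noncomputable def bracketRounds (K m : ℕ) : ℕ :=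
  K * m + ∑ t ∈ Finset.Icc 1 m, ⌊(5/6 : ℝ) * K * (t : ℝ) ^ ((1:ℝ)/2)⌋₊

lemma rpow_three_halves (x : ℝ) (hx : 0 ≤ x) : x ^ ((3:ℝ)/2) = x * Real.sqrt x := by
  rw [Real.sqrt_eq_rpow, show (3:ℝ)/2 = 1 + 1/2 by norm_num,
    Real.rpow_add' hx (by norm_num), Real.rpow_one]

lemma sumSqrt_le (m : ℕ) : ∑ t ∈ Finset.Icc 1 m, Real.sqrt (t : ℝ) ≤ m * Real.sqrt m := by
  calc ∑ t ∈ Finset.Icc 1 m, Real.sqrt (t : ℝ)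
      ≤ ∑ t ∈ Finset.Icc 1 m, Real.sqrt (m : ℝ) := by
        apply Finset.sum_le_sum
        intro t ht
        exact Real.sqrt_le_sqrt (by exact_mod_cast (Finset.mem_Icc.mp ht).2)
    _ = m * Real.sqrt m := by
        rw [Finset.sum_const, Nat.card_Icc]
        simp [nsmul_eq_mul]

lemma le_sumSqrt (m : ℕ) :
    (2/3 : ℝ) * m * Real.sqrt m ≤ ∑ t ∈ Finset.Icc 1 m, Real.sqrt (t : ℝ) := by
  induction m with
  | zero => simp
  | succ m ih =>
    rw [Finset.sum_Icc_succ_top (by omega : 1 ≤ m + 1)]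
    have key : (2/3 : ℝ) * (m+1) * Real.sqrt (m+1) ≤
        (2/3 : ℝ) * m * Real.sqrt m + Real.sqrt (m+1) := by
      set a := Real.sqrt ((m:ℝ)+1) with hadef
      set b := Real.sqrt (m:ℝ) with hbdef
      have ha : 0 ≤ a := Real.sqrt_nonneg _
      have hb : 0 ≤ b := Real.sqrt_nonneg _
      have ha2 : a^2 = (m:ℝ) + 1 := Real.sq_sqrt (by positivity)
      have hb2 : b^2 = (m:ℝ) := Real.sq_sqrt (by positivity)
      have h : a^2 = b^2 + 1 := by rw [ha2, hb2]
      have h3 : 2*a^3 ≤ 2*b^3 + 3*a := by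
        nlinarith [sq_nonneg (a-b), mul_nonneg ha hb, mul_nonneg hb hb, sq_nonneg (a+b),
          mul_nonneg (mul_nonneg hb hb) hb]
      nlinarith [h3]
    push_cast
    push_cast at ih key
    linarith

lemma bracketRounds_le (K m : ℕ) :
    (bracketRounds K m : ℝ) ≤ K * m + (5/6 : ℝ) * K * ∑ t ∈ Finset.Icc 1 m, Real.sqrt (t : ℝ) := by
  unfold bracketRounds
  push_cast
  rw [Finset.mul_sum]
  gcongr with t ht
  rw [← Real.sqrt_eq_rpow]
  exact Nat.floor_le (by positivity)

lemma le_bracketRounds (K m : ℕ) (hK : 1 ≤ K) :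
    (5/6 : ℝ) * K * ∑ t ∈ Finset.Icc 1 m, Real.sqrt (t : ℝ) ≤ (bracketRounds K m : ℝ) := by
  unfold bracketRounds
  push_cast
  have h1 : ∀ t ∈ Finset.Icc 1 m, (5/6 : ℝ) * K * Real.sqrt t - 1 ≤
      (⌊(5/6 : ℝ) * K * (t : ℝ) ^ ((1:ℝ)/2)⌋₊ : ℝ) := by
    intro t ht
    rw [← Real.sqrt_eq_rpow]
    exact le_of_lt (Nat.sub_one_lt_floor _)
  have h2 : ∑ t ∈ Finset.Icc 1 m, ((5/6 : ℝ) * K * Real.sqrt t - 1) ≤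
      ∑ t ∈ Finset.Icc 1 m, (⌊(5/6 : ℝ) * K * (t : ℝ) ^ ((1:ℝ)/2)⌋₊ : ℝ) :=
    Finset.sum_le_sum h1
  rw [Finset.sum_sub_distrib, ← Finset.mul_sum, Finset.sum_const, Nat.card_Icc] at h2
  have hKm : (m : ℝ) ≤ (K : ℝ) * m := by
    have : (1:ℝ) ≤ K := by exact_mod_cast hK
    nlinarith [Nat.cast_nonneg (α := ℝ) m]
  simp only [nsmul_eq_mul, mul_one, Nat.add_sub_cancel] at h2
  linarith

theorem bracket_index_bounds (T K q : ℕ) (hT : 2 * K < T) (hK : 1 ≤ K) (hq : 2 ≤ q)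
    (h1 : bracketRounds K (q - 1) + K < T) (h2 : T ≤ bracketRounds K q) :
    (1/2 : ℝ) * (T : ℝ) ^ ((2:ℝ)/3) / (K : ℝ) ^ ((2:ℝ)/3) ≤ (q : ℝ) ∧
    (q : ℝ) ≤ 3 * (T : ℝ) ^ ((2:ℝ)/3) / (K : ℝ) ^ ((2:ℝ)/3) := by
  have hK1 : (1:ℝ) ≤ K := by exact_mod_cast hK
  have hKpos : (0:ℝ) < K := by linarith
  have hq2 : (2:ℝ) ≤ q := by exact_mod_cast hq
  have hqpos : (0:ℝ) < q := by linarith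
  have hTpos : (0:ℝ) < T := by
    have : (0:ℕ) < T := by omega
    exact_mod_cast this
  have hKrpos : (0:ℝ) < (K:ℝ) ^ ((2:ℝ)/3) := Real.rpow_pos_of_pos hKpos _
  have hexp : ((3:ℝ)/2) * ((2:ℝ)/3) = 1 := by norm_num
  have hexp' : ((2:ℝ)/3) * ((3:ℝ)/2) = 1 := by norm_num
  constructor
  · -- lower bound on q : T ≤ K q + (5/6) K q √q ≤ (2 q K^{2/3})^{3/2}
    have hub : (T : ℝ) ≤ (K:ℝ) * q + (5/6 : ℝ) * K * (q * Real.sqrt q) := by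
      calc (T : ℝ) ≤ (bracketRounds K q : ℝ) := by exact_mod_cast h2
        _ ≤ (K:ℝ) * q + (5/6 : ℝ) * K * ∑ t ∈ Finset.Icc 1 q, Real.sqrt (t : ℝ) :=
            bracketRounds_le K q
        _ ≤ (K:ℝ) * q + (5/6 : ℝ) * K * (q * Real.sqrt q) := by
            gcongr
            exact sumSqrt_le q
    have hsn : (0:ℝ) ≤ Real.sqrt q := Real.sqrt_nonneg _
    have hs : (1:ℝ) ≤ Real.sqrt q := by
      rw [show (1:ℝ) = Real.sqrt 1 by simp]
      exact Real.sqrt_le_sqrt (by linarith)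
    have hr1 : (1:ℝ) ≤ Real.sqrt 2 := by
      rw [show (1:ℝ) = Real.sqrt 1 by simp]
      exact Real.sqrt_le_sqrt (by norm_num)
    have hkey : (T : ℝ) ≤ ((2 * q) * (K:ℝ) ^ ((2:ℝ)/3)) ^ ((3:ℝ)/2) := by
      have e1 : ((2 * q) * (K:ℝ) ^ ((2:ℝ)/3)) ^ ((3:ℝ)/2)
          = (2 * (q:ℝ)) ^ ((3:ℝ)/2) * K := by
        rw [Real.mul_rpow (by positivity) (by positivity), ← Real.rpow_mul hKpos.le,
          hexp', Real.rpow_one]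
      rw [e1, rpow_three_halves _ (by positivity), Real.sqrt_mul (by norm_num)]
      have hA : 2*(q:ℝ)*Real.sqrt q*K ≤ 2*(q:ℝ)*(Real.sqrt 2*Real.sqrt q)*K := by
        nlinarith [mul_nonneg (mul_nonneg hqpos.le hsn) hKpos.le]
      have hB : (K:ℝ)*q ≤ (K:ℝ)*q*Real.sqrt q := by
        nlinarith [mul_nonneg hKpos.le hqpos.le]
      have hC : (0:ℝ) ≤ (K:ℝ)*q*Real.sqrt q := by positivity
      linarith
    have hmono := Real.rpow_le_rpow hTpos.le hkey (by norm_num : (0:ℝ) ≤ 2/3)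
    rw [← Real.rpow_mul (by positivity), hexp, Real.rpow_one] at hmono
    rw [div_le_iff₀ hKrpos]
    linarith
  · -- upper bound on q
    have m1 : (1:ℕ) ≤ q - 1 := by omega
    set m := q - 1 with hm
    have hmq : (m : ℝ) = (q:ℝ) - 1 := by
      have h' : (m:ℕ) + 1 = q := by omega
      have := congrArg (fun n : ℕ => (n:ℝ)) h'
      push_cast at this
      linarith
    have hlb : (5/9 : ℝ) * K * (m * Real.sqrt m) ≤ (T : ℝ) := by
      calc (5/9 : ℝ) * K * (m * Real.sqrt m)
          = (5/6 : ℝ) * K * ((2/3 : ℝ) * m * Real.sqrt m) := by ring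
        _ ≤ (5/6 : ℝ) * K * ∑ t ∈ Finset.Icc 1 m, Real.sqrt (t : ℝ) := by
            gcongr
            exact le_sumSqrt m
        _ ≤ (bracketRounds K m : ℝ) := le_bracketRounds K m hK
        _ ≤ (T : ℝ) := by
            have : bracketRounds K m ≤ T := by omega
            exact_mod_cast this
    have hkey : (((q:ℝ)/3) * (K:ℝ) ^ ((2:ℝ)/3)) ^ ((3:ℝ)/2) ≤ (T : ℝ) := by
      have e1 : (((q:ℝ)/3) * (K:ℝ) ^ ((2:ℝ)/3)) ^ ((3:ℝ)/2)
          = ((q:ℝ)/3) ^ ((3:ℝ)/2) * K := by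
        rw [Real.mul_rpow (by positivity) (by positivity), ← Real.rpow_mul hKpos.le,
          hexp', Real.rpow_one]
      rw [e1, rpow_three_halves _ (by positivity)]
      have hm2 : (q:ℝ)/2 ≤ m := by rw [hmq]; linarith
      have hmnn : (0:ℝ) ≤ m := by positivity
      have hsm : Real.sqrt ((q:ℝ)/2) ≤ Real.sqrt m := Real.sqrt_le_sqrt hm2
      have hmono : ((q:ℝ)/2) * Real.sqrt ((q:ℝ)/2) ≤ (m:ℝ) * Real.sqrt m :=
        mul_le_mul hm2 hsm (Real.sqrt_nonneg _) hmnn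
      have h36 : Real.sqrt (36:ℝ) = 6 := by
        rw [show (36:ℝ) = 6^2 by norm_num, Real.sqrt_sq (by norm_num : (0:ℝ) ≤ 6)]
      have h25 : Real.sqrt (25:ℝ) = 5 := by
        rw [show (25:ℝ) = 5^2 by norm_num, Real.sqrt_sq (by norm_num : (0:ℝ) ≤ 5)]
      have e6 : (6:ℝ) * Real.sqrt (1/3) = Real.sqrt 12 := by
        rw [← h36, ← Real.sqrt_mul (by norm_num : (0:ℝ) ≤ 36)]
        norm_num
      have e5 : (5:ℝ) * Real.sqrt (1/2) = Real.sqrt (25/2) := by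
        rw [← h25, ← Real.sqrt_mul (by norm_num : (0:ℝ) ≤ 25)]
        norm_num
      have key2 : (6:ℝ) * Real.sqrt (1/3) ≤ 5 * Real.sqrt (1/2) := by
        rw [e6, e5]
        exact Real.sqrt_le_sqrt (by norm_num)
      have hcmp : ((q:ℝ)/3) * Real.sqrt ((q:ℝ)/3) ≤
          (5/9 : ℝ) * (((q:ℝ)/2) * Real.sqrt ((q:ℝ)/2)) := by
        rw [show (q:ℝ)/3 = (q:ℝ) * (1/3) by ring, show (q:ℝ)/2 = (q:ℝ) * (1/2) by ring,
          Real.sqrt_mul hqpos.le, Real.sqrt_mul hqpos.le]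
        have hqs : (0:ℝ) ≤ (q:ℝ) * Real.sqrt q := by positivity
        have := mul_le_mul_of_nonneg_left key2 hqs
        linarith [this]
      have c1 : ((q:ℝ)/3 * Real.sqrt ((q:ℝ)/3)) * K ≤
          (5/9 : ℝ) * (((q:ℝ)/2) * Real.sqrt ((q:ℝ)/2)) * K :=
        mul_le_mul_of_nonneg_right hcmp hKpos.le
      have c2 : (5/9 : ℝ) * (((q:ℝ)/2) * Real.sqrt ((q:ℝ)/2)) * K ≤
          (5/9 : ℝ) * ((m:ℝ) * Real.sqrt m) * K := by
        have := mul_le_mul_of_nonneg_right hmono hKpos.le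
        linarith [this]
      calc ((q:ℝ)/3 * Real.sqrt ((q:ℝ)/3)) * K
          ≤ (5/9 : ℝ) * ((m:ℝ) * Real.sqrt m) * K := le_trans c1 c2
        _ = (5/9 : ℝ) * K * ((m:ℝ) * Real.sqrt m) := by ring
        _ ≤ (T : ℝ) := hlb
    have hmono := Real.rpow_le_rpow (by positivity) hkey (by norm_num : (0:ℝ) ≤ 2/3)
    rw [← Real.rpow_mul (by positivity), hexp, Real.rpow_one] at hmono
    rw [le_div_iff₀ hKrpos]
    linarith
end

section
/- With welfare regret R_T = ∑_{t=1}^T (V(ω*) − V(ω_t)), agent-sum regret S_T = ∑_{i=1}^n ∑_{t=1}^T (u_i* − u_{i,t}), and seller regret R₀_T defined relative to the VCG utilities, and W_T = (1/T)∑_{i=1}^n ∑_{t=1}^T (p_{i,t} + V_{−i}(ω_t)) − ∑_{i=1}^n V_{−i}(ω*_{−i}), we have S_T = n·R_T + T·W_T and R₀_T = −(n−1)·R_T − T·W_T. -/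
/-!
Write `V_{-i} = V - v_i`. Then agent `i`'s regret in round `t` is the welfare regret of that round
plus `p_{i,t} + V_{-i}(ω_t) - V_{-i}(ω*_{-i})`, and summing over agents and rounds gives the first
identity. VCG and the mechanism are both budget balanced (agents' and seller's utilities add up to
the welfare), so agent-sum regret plus seller regret is the welfare regret, which gives the second.
-/

open Finset

section Welfare

variable {ι Ω κ : Type*} [Fintype ι] [DecidableEq ι] [Fintype κ] (v0 : Ω → ℝ) (v : ι → Ω → ℝ)

def welfare (ω : Ω) : ℝ := v0 ω + ∑ i, v i ω

def welfareWithout (i : ι) (ω : Ω) : ℝ := v0 ω + ∑ j ∈ univ.erase i, v j ω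

lemma welfareWithout_eq_sub (i : ι) (ω : Ω) :
    welfareWithout v0 v i ω = welfare v0 v ω - v i ω := by
  rw [welfareWithout, welfare, sum_erase_eq_sub (mem_univ i)]
  ring

lemma sum_sum_vcg_regret_eq (ωstar : Ω) (ωmi : ι → Ω) (ωt : κ → Ω) (p : ι → κ → ℝ) :
    ∑ i, ∑ t, ((welfare v0 v ωstar - welfareWithout v0 v i (ωmi i)) - (v i (ωt t) - p i t)) =
      Fintype.card ι * ∑ t, (welfare v0 v ωstar - welfare v0 v (ωt t)) +
        (∑ i, ∑ t, (p i t + welfareWithout v0 v i (ωt t)) -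
          Fintype.card κ * ∑ i, welfareWithout v0 v i (ωmi i)) := by
  have regret_eq : ∀ i t,
      (welfare v0 v ωstar - welfareWithout v0 v i (ωmi i)) - (v i (ωt t) - p i t) =
        (welfare v0 v ωstar - welfare v0 v (ωt t)) +
          (p i t + welfareWithout v0 v i (ωt t) - welfareWithout v0 v i (ωmi i)) := by
    intro i t
    rw [welfareWithout_eq_sub v0 v i (ωt t)]
    ring
  simp only [regret_eq, sum_add_distrib, sum_sub_distrib, sum_const, card_univ, nsmul_eq_mul,
    ← mul_sum]
  ring

lemma sum_sum_vcg_regret_add_seller_regret (ωstar : Ω) (ωmi : ι → Ω) (ωt : κ → Ω)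
    (p : ι → κ → ℝ) :
    ∑ i, ∑ t, ((welfare v0 v ωstar - welfareWithout v0 v i (ωmi i)) - (v i (ωt t) - p i t)) +
      ∑ t, ((∑ i, welfareWithout v0 v i (ωmi i) - (Fintype.card ι - 1) * welfare v0 v ωstar) -
        (v0 (ωt t) + ∑ i, p i t)) =
      ∑ t, (welfare v0 v ωstar - welfare v0 v (ωt t)) := by
  rw [sum_comm, ← sum_add_distrib]
  refine sum_congr rfl fun t _ => ?_
  simp only [welfare, sum_sub_distrib, sum_const, card_univ, nsmul_eq_mul]
  ring

end Welfare

/-- Decomposition of agent-sum regret and seller regret in terms of the welfare regret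
`R_T` and the price-estimation term `W_T`. -/
theorem regret_decomposition {Ω : Type*} (n T : ℕ) (hT : 0 < T)
    (v0 : Ω → ℝ) (v : Fin n → Ω → ℝ)
    (ωstar : Ω) (ωmi : Fin n → Ω) (ωt : Fin T → Ω) (p : Fin n → Fin T → ℝ) :
    let V : Ω → ℝ := fun ω => v0 ω + ∑ i, v i ω
    let Vmi : Fin n → Ω → ℝ := fun i ω => v0 ω + ∑ j ∈ Finset.univ.erase i, v j ω
    let RT : ℝ := ∑ t, (V ωstar - V (ωt t))
    let uistar : Fin n → ℝ := fun i => V ωstar - Vmi i (ωmi i)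
    let uit : Fin n → Fin T → ℝ := fun i t => v i (ωt t) - p i t
    let ST : ℝ := ∑ i, ∑ t, (uistar i - uit i t)
    let u0star : ℝ := ∑ i, Vmi i (ωmi i) - ((n : ℝ) - 1) * V ωstar
    let u0t : Fin T → ℝ := fun t => v0 (ωt t) + ∑ i, p i t
    let R0T : ℝ := ∑ t, (u0star - u0t t)
    let WT : ℝ := (1 / (T : ℝ)) * ∑ i, ∑ t, (p i t + Vmi i (ωt t)) - ∑ i, Vmi i (ωmi i)
    ST = (n : ℝ) * RT + (T : ℝ) * WT ∧ R0T = -((n : ℝ) - 1) * RT - (T : ℝ) * WT := by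
  intro V Vmi RT uistar uit ST u0star u0t R0T WT
  have agents : ST = n * RT + (∑ i, ∑ t, (p i t + Vmi i (ωt t)) - T * ∑ i, Vmi i (ωmi i)) := by
    have h := sum_sum_vcg_regret_eq v0 v ωstar ωmi ωt p
    rwa [Fintype.card_fin, Fintype.card_fin] at h
  have budget : ST + R0T = RT := by
    have h := sum_sum_vcg_regret_add_seller_regret v0 v ωstar ωmi ωt p
    rwa [Fintype.card_fin] at h
  have scaled_WT : T * WT = ∑ i, ∑ t, (p i t + Vmi i (ωt t)) - T * ∑ i, Vmi i (ωmi i) := by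
    have : (T : ℝ) ≠ 0 := by positivity
    simp only [WT]
    field_simp
  exact ⟨by linear_combination agents - scaled_WT,
    by linear_combination budget - agents + scaled_WT⟩
end
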